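/- Let k ≥ 2 and n ≥ 2k²+1, and let G be a graph of order n that is a subgraph of K₂ ∨ (K_{n−k−1} + K_{k−1}) with minimum degree δ(G) ≥ k. Then μ(G) < n − k, unless G = K₂ ∨ (K_{n−k−1} + K_{k−1}). -/

import Mathlib

/-!
Every vertex of `K_{k-1}` has degree exactly `k` in `H = K₂ ∨ (K_{n-k-1} + K_{k-1})`, so
`δ(G) ≥ k` forces `G` to keep every edge at `K_{k-1}`, and a proper subgraph `G < H` misses an
edge `pq` of the clique `K₂ ∨ K_{n-k-1}`. For such `G` a positive test vector `x` (weight slightly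
above `1` on `K₂`, whose vertices also see `K_{k-1}`; `1` on `K_{n-k-1}`; a small `t` on
`K_{k-1}`; lowered by `γ` at `p` and `q`) satisfies `A(G) x ≤ c x` for some `c < n - k`, and
the Collatz–Wielandt bound gives `μ(G) ≤ c`. The hypothesis `n ≥ 2k² + 1` leaves room to choose
the weights.
-/

open SimpleGraph

/-- The spectral radius of a finite simple graph: the largest eigenvalue
(supremum of the real spectrum) of its adjacency matrix. -/
noncomputable def specRad {V : Type*} [Fintype V] (G : SimpleGraph V) : ℝ :=
  letI := Classical.decEq V
  letI := Classical.decRel G.Adj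
  sSup (spectrum ℝ (G.adjMatrix ℝ))

/-- The signless Laplacian spectral radius of a finite simple graph:
the largest eigenvalue of `D(G) + A(G)`. -/
noncomputable def qRad {V : Type*} [Fintype V] (G : SimpleGraph V) : ℝ :=
  letI := Classical.decEq V
  letI := Classical.decRel G.Adj
  sSup (spectrum ℝ (G.degMatrix ℝ + G.adjMatrix ℝ))

/-- The join of two graphs: their disjoint union together with all edges between them. -/
def graphJoin {α β : Type*} (G : SimpleGraph α) (H : SimpleGraph β) :
    SimpleGraph (α ⊕ β) := (Gᶜ ⊕g Hᶜ)ᶜ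

/-- A graph is Hamilton-connected if every two distinct vertices are the
endpoints of a Hamiltonian path. -/
def IsHamConnected {V : Type*} [DecidableEq V] (G : SimpleGraph V) : Prop :=
  ∀ u v : V, u ≠ v → ∃ p : G.Walk u v, p.IsHamiltonian

/-- A graph is traceable from every vertex if every vertex is an endpoint
of some Hamiltonian path. -/
def TraceableFromEveryVertex {V : Type*} [DecidableEq V] (G : SimpleGraph V) : Prop :=
  ∀ u : V, ∃ (v : V) (p : G.Walk u v), p.IsHamiltonian

/-- A graph is traceable if it contains a Hamiltonian path. -/
def IsTraceable {V : Type*} [DecidableEq V] (G : SimpleGraph V) : Prop :=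
  ∃ (u v : V) (p : G.Walk u v), p.IsHamiltonian

namespace Matrix

theorem abs_le_of_mem_spectrum_of_mulVec_le {ι : Type*} [Fintype ι] [DecidableEq ι]
    {A : Matrix ι ι ℝ} {x : ι → ℝ} {c μ : ℝ} (hA : ∀ i j, 0 ≤ A i j) (hx : ∀ i, 0 < x i)
    (hAx : A *ᵥ x ≤ c • x) (hμ : μ ∈ spectrum ℝ A) : |μ| ≤ c := by
  rw [← spectrum_toLin', ← Module.End.hasEigenvalue_iff_mem_spectrum] at hμ
  obtain ⟨v, hv⟩ := hμ.exists_hasEigenvector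
  have hAv : A *ᵥ v = μ • v := hv.apply_eq_smul
  obtain ⟨j, hj⟩ : ∃ j, v j ≠ 0 := Function.ne_iff.mp hv.2
  have : Nonempty ι := ⟨j⟩
  -- `r` is the least multiple of `x` that dominates `|v|`; it is attained at `i`.
  obtain ⟨i, -, hi⟩ := Finset.univ.exists_max_image (fun j => |v j| / x j) Finset.univ_nonempty
  set r := |v i| / x i
  have hvr : ∀ j, |v j| ≤ r * x j := fun j => (div_le_iff₀ (hx j)).mp (hi j (Finset.mem_univ j))
  have hr : 0 < r := (div_pos (abs_pos.mpr hj) (hx j)).trans_le (hi j (Finset.mem_univ j))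
  have hvi : |v i| = r * x i := (div_mul_cancel₀ _ (hx i).ne').symm
  have key : |μ| * (r * x i) ≤ c * (r * x i) := calc
    |μ| * (r * x i) = |(A *ᵥ v) i| := by rw [hAv, ← hvi]; simp [abs_mul]
    _ ≤ ∑ j, A i j * |v j| := by
      simpa [mulVec, dotProduct, abs_mul, abs_of_nonneg (hA i _)] using
        Finset.abs_sum_le_sum_abs (fun j => A i j * v j) Finset.univ
    _ ≤ ∑ j, A i j * (r * x j) := by gcongr with j; exacts [hA i j, hvr j]
    _ = r * (A *ᵥ x) i := by
      simp only [mulVec, dotProduct, Finset.mul_sum]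
      exact Finset.sum_congr rfl fun j _ => by ring
    _ ≤ r * (c * x i) := by gcongr; exact hAx i
    _ = c * (r * x i) := by ring
  exact le_of_mul_le_mul_right key (mul_pos hr (hx i))

end Matrix

theorem specRad_eq {V : Type*} [Fintype V] [DecidableEq V] (G : SimpleGraph V)
    [DecidableRel G.Adj] : specRad G = sSup (spectrum ℝ (G.adjMatrix ℝ)) := by
  unfold specRad
  congr!

theorem specRad_le_of_sum_neighborFinset_le {V : Type*} [Fintype V] [DecidableEq V]
    [Nonempty V] (G : SimpleGraph V) [DecidableRel G.Adj] {x : V → ℝ} {c : ℝ}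
    (hx : ∀ v, 0 < x v) (hrow : ∀ v, ∑ u ∈ G.neighborFinset v, x u ≤ c * x v) :
    specRad G ≤ c := by
  have hc : 0 ≤ c := by
    obtain ⟨v⟩ := ‹Nonempty V›
    exact nonneg_of_mul_nonneg_left
      ((Finset.sum_nonneg fun u _ => (hx u).le).trans (hrow v)) (hx v)
  rw [specRad_eq]
  refine Real.sSup_le (fun μ hμ => (le_abs_self μ).trans ?_) hc
  refine Matrix.abs_le_of_mem_spectrum_of_mulVec_le (fun i j => ?_) hx (fun v => ?_) hμ
  · rw [SimpleGraph.adjMatrix_apply]; split_ifs <;> norm_num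
  · simpa [SimpleGraph.adjMatrix_mulVec_apply] using hrow v

namespace SimpleGraph

theorem adj_of_le_of_ncard_neighborSet_le {V : Type*} [Finite V] {G H : SimpleGraph V}
    (hle : G ≤ H) {v w : V} (hcard : (H.neighborSet v).ncard ≤ (G.neighborSet v).ncard)
    (hw : H.Adj v w) : G.Adj v w := by
  have : G.neighborSet v = H.neighborSet v :=
    Set.eq_of_subset_of_ncard_le (fun u hu => hle hu) hcard (Set.toFinite _)
  exact (this ▸ hw : w ∈ G.neighborSet v)

theorem sum_neighborFinset_le_sum_sub_sum {V : Type*} [Fintype V] [DecidableEq V]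
    {G : SimpleGraph V} [DecidableRel G.Adj] {x : V → ℝ} (hx : ∀ v, 0 ≤ x v) {v : V}
    {s : Finset V} (hs : ∀ u ∈ s, ¬G.Adj v u) :
    ∑ u ∈ G.neighborFinset v, x u ≤ ∑ u, x u - ∑ u ∈ s, x u := by
  rw [← Finset.sum_compl_add_sum s, add_sub_cancel_right]
  exact Finset.sum_le_sum_of_subset_of_nonneg
    (fun u hu => Finset.mem_compl.mpr fun hus => hs u hus ((mem_neighborFinset _ _ _).mp hu))
    (fun u _ _ => hx u)

end SimpleGraph

@[simp] theorem graphJoin_adj_inr_inr {α β : Type*} {G : SimpleGraph α} {H : SimpleGraph β}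
    {b b' : β} : (graphJoin G H).Adj (.inr b) (.inr b') ↔ H.Adj b b' := by
  by_cases h : b = b' <;> simp [graphJoin, h]

abbrev k2JoinCliqueSum (a b : ℕ) : SimpleGraph (Fin 2 ⊕ (Fin a ⊕ Fin b)) :=
  graphJoin ⊤ ((⊤ : SimpleGraph (Fin a)) ⊕g (⊤ : SimpleGraph (Fin b)))

namespace k2JoinCliqueSum

variable {a b : ℕ}

theorem ncard_neighborSet_inr_inr_le (d : Fin b) :
    ((k2JoinCliqueSum a b).neighborSet (.inr (.inr d))).ncard ≤ b + 1 := by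
  classical
  let nbrs : Finset (Fin 2 ⊕ (Fin a ⊕ Fin b)) :=
    Finset.univ.map .inl ∪ (Finset.univ.erase d).map (.trans .inr .inr)
  have hsub : (k2JoinCliqueSum a b).neighborSet (.inr (.inr d)) ⊆ nbrs := by
    rintro (i | w | d') h <;> simp_all [nbrs, eq_comm]
  calc _ ≤ (nbrs : Set _).ncard := Set.ncard_le_ncard hsub (Finset.finite_toSet _)
    _ ≤ 2 + (b - 1) := by
      rw [Set.ncard_coe_finset]
      refine (Finset.card_union_le _ _).trans ?_
      simp [Finset.card_erase_of_mem]
    _ = b + 1 := by have := d.pos; omega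

theorem adj_inr_inr_of_le {G : SimpleGraph (Fin 2 ⊕ (Fin a ⊕ Fin b))}
    (hG : G ≤ k2JoinCliqueSum a b) (hδ : ∀ v, b + 1 ≤ (G.neighborSet v).ncard) {d : Fin b}
    {u : Fin 2 ⊕ (Fin a ⊕ Fin b)} (h : (k2JoinCliqueSum a b).Adj (.inr (.inr d)) u) :
    G.Adj (.inr (.inr d)) u :=
  SimpleGraph.adj_of_le_of_ncard_neighborSet_le hG
    ((ncard_neighborSet_inr_inr_le d).trans (hδ _)) h

end k2JoinCliqueSum

/-- Each `row_*` field is the inequality `∑_{u ~ v} x u ≤ c * x v` for the test vector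
`k2JoinCliqueSum.testVector` at a vertex `v` of `K₂`, `K_a` or `K_b` (`_end`: `v` is an end of
the missing edge), with the left side bounded by `∑ x` minus the weights of known non-neighbours. -/
structure RowBoundParams (a b α t γ c : ℝ) : Prop where
  one_le_α : 1 ≤ α
  t_pos : 0 < t
  γ_nonneg : 0 ≤ γ
  γ_lt_one : γ < 1
  row_k2 : α + a + b * t - 2 * γ ≤ c * α
  row_k2_end : α + a - 1 + b * t ≤ c * (α - γ)
  row_ka : 2 * α + a - 1 - 2 * γ ≤ c
  row_ka_end : 2 * α + a - 2 ≤ c * (1 - γ)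
  row_kb : 2 * α + (b - 1) * t ≤ c * t

theorem exists_rowBoundParams {a b : ℝ} (hb : 1 ≤ b) (hab : 2 * b ^ 2 + 3 * b + 1 ≤ a) :
    ∃ α t γ c, c < a + 1 ∧ RowBoundParams a b α t γ c := by
  have ha : 0 < a := by nlinarith
  have hab' : 0 < a - b := by nlinarith
  set t := 5 / (2 * (a - b)) with ht_def
  set ε := b * t / a with hε_def
  set γ := 3 / (4 * (a + 1)) with hγ_def
  set σ := 1 / (4 * (a + 1)) with hσ_def
  have ht : t * (a - b) = 5 / 2 := by rw [ht_def]; field_simp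
  have hε : ε * a = b * t := by rw [hε_def]; field_simp
  have hγ : γ * (a + 1) = 3 / 4 := by rw [hγ_def]; field_simp
  have hσ : σ * (a + 1) = 1 / 4 := by rw [hσ_def]; field_simp
  have ht0 : 0 < t := by positivity
  have hε0 : 0 ≤ ε := by positivity
  have hσ0 : 0 < σ := by positivity
  -- For `c = a + 1 - σ`, `α = 1 + ε` and `aε = bt` the five rows read `σ(1 + ε) ≤ 2γ`,
  -- `(a + 1)γ + σ(1 + ε - γ) ≤ 1`, `2ε + σ ≤ 2γ`, `2ε + (a + 1)γ + σ(1 - γ) ≤ 1` and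
  -- `2 + 2ε ≤ (a + 2 - b - σ)t`; they hold since `(a + 1)ε ≤ 5/8` and `ε ≤ 5/56`.
  have hkey : 4 * b * (a + 1) ≤ a * (a - b) := by nlinarith
  have hεN : ε * (a + 1) ≤ 5 / 8 := by
    refine le_of_mul_le_mul_right ?_ (mul_pos ha hab')
    linear_combination (a + 1) * (a - b) * hε + b * (a + 1) * ht + 5 / 8 * hkey
  refine ⟨1 + ε, t, γ, a + 1 - σ, by linarith,
    ⟨by linarith, ht0, by positivity, by nlinarith, ?_, ?_, ?_, ?_, ?_⟩⟩ <;> nlinarith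

namespace k2JoinCliqueSum

variable {a b : ℕ} {α t γ c : ℝ} {p q : Fin 2 ⊕ (Fin a ⊕ Fin b)}

def cliqueA (a b : ℕ) : Finset (Fin 2 ⊕ (Fin a ⊕ Fin b)) :=
  Finset.univ.map (.trans .inl .inr)

def cliqueB (a b : ℕ) : Finset (Fin 2 ⊕ (Fin a ⊕ Fin b)) :=
  Finset.univ.map (.trans .inr .inr)

def classWeight (α t : ℝ) : Fin 2 ⊕ (Fin a ⊕ Fin b) → ℝ :=
  Sum.elim (fun _ => α) (Sum.elim (fun _ => 1) (fun _ => t))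

def testVector (α t γ : ℝ) (p q v : Fin 2 ⊕ (Fin a ⊕ Fin b)) : ℝ :=
  classWeight α t v - (if v = p then γ else 0) - (if v = q then γ else 0)

theorem sum_classWeight : ∑ v, classWeight (a := a) (b := b) α t v = 2 * α + a + b * t := by
  simp [classWeight, Fintype.sum_sum_type]; ring

theorem one_le_classWeight (hα : 1 ≤ α) {v : Fin 2 ⊕ (Fin a ⊕ Fin b)}
    (hv : ∀ d, v ≠ .inr (.inr d)) : 1 ≤ classWeight α t v := by
  rcases v with s | w | d
  exacts [hα, le_rfl, absurd rfl (hv d)]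

theorem classWeight_pos (hα : 0 < α) (ht : 0 < t) (v : Fin 2 ⊕ (Fin a ⊕ Fin b)) :
    0 < classWeight α t v := by
  rcases v with s | w | d
  exacts [hα, one_pos, ht]

theorem sum_testVector : ∑ v, testVector α t γ p q v = 2 * α + a + b * t - 2 * γ := by
  simp only [testVector, Finset.sum_sub_distrib, Finset.sum_ite_eq', Finset.mem_univ, if_true,
    sum_classWeight]
  ring

theorem sum_cliqueB_testVector (hp : ∀ d, p ≠ .inr (.inr d)) (hq : ∀ d, q ≠ .inr (.inr d)) :
    ∑ v ∈ cliqueB a b, testVector α t γ p q v = b * t := by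
  simp [cliqueB, testVector, classWeight, Ne.symm (hp _), Ne.symm (hq _)]

theorem testVector_comm (v : Fin 2 ⊕ (Fin a ⊕ Fin b)) :
    testVector α t γ p q v = testVector α t γ q p v := by
  simp only [testVector]; ring

theorem testVector_of_ne {v : Fin 2 ⊕ (Fin a ⊕ Fin b)} (hp : v ≠ p) (hq : v ≠ q) :
    testVector α t γ p q v = classWeight α t v := by
  simp [testVector, hp, hq]

theorem testVector_left (hpq : p ≠ q) : testVector α t γ p q p = classWeight α t p - γ := by
  simp [testVector, hpq]

theorem one_sub_le_testVector_right (hα : 1 ≤ α) (hpq : p ≠ q)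
    (hq : ∀ d, q ≠ .inr (.inr d)) : 1 - γ ≤ testVector α t γ p q q := by
  rw [testVector_comm, testVector_left hpq.symm]
  linarith [one_le_classWeight (t := t) hα hq]

theorem testVector_le_classWeight (hγ : 0 ≤ γ) (v : Fin 2 ⊕ (Fin a ⊕ Fin b)) :
    testVector α t γ p q v ≤ classWeight α t v := by
  unfold testVector; split_ifs <;> linarith

theorem testVector_pos (hP : RowBoundParams a b α t γ c) (hpq : p ≠ q)
    (hp : ∀ d, p ≠ .inr (.inr d)) (hq : ∀ d, q ≠ .inr (.inr d)) (v : Fin 2 ⊕ (Fin a ⊕ Fin b)) :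
    0 < testVector α t γ p q v := by
  by_cases hvp : v = p
  · subst hvp
    rw [testVector_comm]
    linarith [one_sub_le_testVector_right (t := t) (γ := γ) hP.one_le_α hpq.symm hp,
      hP.γ_lt_one]
  by_cases hvq : v = q
  · subst hvq
    linarith [one_sub_le_testVector_right (t := t) (γ := γ) hP.one_le_α hpq hq, hP.γ_lt_one]
  rw [testVector_of_ne hvp hvq]
  exact classWeight_pos (by linarith [hP.one_le_α]) hP.t_pos v

variable {G : SimpleGraph (Fin 2 ⊕ (Fin a ⊕ Fin b))} [DecidableRel G.Adj]

theorem sum_neighborFinset_testVector_inl_le (hP : RowBoundParams a b α t γ c) (hpq : p ≠ q)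
    (hp : ∀ d, p ≠ .inr (.inr d)) (hq : ∀ d, q ≠ .inr (.inr d)) (s : Fin 2)
    (hsp : .inl s ≠ p) (hsq : .inl s ≠ q) :
    ∑ u ∈ G.neighborFinset (.inl s), testVector α t γ p q u ≤
      c * testVector α t γ p q (.inl s) := by
  refine (G.sum_neighborFinset_le_sum_sub_sum (fun u => (testVector_pos hP hpq hp hq u).le)
    (s := {.inl s}) (by simp)).trans ?_
  rw [sum_testVector, Finset.sum_singleton, testVector_of_ne hsp hsq]
  simp only [classWeight, Sum.elim_inl]
  linarith [hP.row_k2]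

theorem sum_neighborFinset_testVector_inr_inl_le (hP : RowBoundParams a b α t γ c)
    (hG : G ≤ k2JoinCliqueSum a b) (hpq : p ≠ q) (hp : ∀ d, p ≠ .inr (.inr d))
    (hq : ∀ d, q ≠ .inr (.inr d)) (w : Fin a) (hwp : .inr (.inl w) ≠ p)
    (hwq : .inr (.inl w) ≠ q) :
    ∑ u ∈ G.neighborFinset (.inr (.inl w)), testVector α t γ p q u ≤
      c * testVector α t γ p q (.inr (.inl w)) := by
  have hns : ∀ u ∈ insert (.inr (.inl w)) (cliqueB a b), ¬G.Adj (.inr (.inl w)) u := by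
    simp only [Finset.mem_insert, cliqueB, Finset.mem_map, Finset.mem_univ, true_and]
    rintro u (rfl | ⟨d, rfl⟩) h
    · exact G.irrefl h
    · simpa using hG h
  refine (G.sum_neighborFinset_le_sum_sub_sum
    (fun u => (testVector_pos hP hpq hp hq u).le) hns).trans ?_
  rw [sum_testVector, Finset.sum_insert (by simp [cliqueB]), sum_cliqueB_testVector hp hq,
    testVector_of_ne hwp hwq]
  simp only [classWeight, Sum.elim_inr, Sum.elim_inl]
  linarith [hP.row_ka]

theorem sum_neighborFinset_testVector_inr_inr_le (hP : RowBoundParams a b α t γ c)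
    (hG : G ≤ k2JoinCliqueSum a b) (hp : ∀ d, p ≠ .inr (.inr d))
    (hq : ∀ d, q ≠ .inr (.inr d)) (d : Fin b) :
    ∑ u ∈ G.neighborFinset (.inr (.inr d)), testVector α t γ p q u ≤
      c * testVector α t γ p q (.inr (.inr d)) := by
  have hns : ∀ u ∈ insert (.inr (.inr d)) (cliqueA a b), ¬G.Adj (.inr (.inr d)) u := by
    simp only [Finset.mem_insert, cliqueA, Finset.mem_map, Finset.mem_univ, true_and]
    rintro u (rfl | ⟨w, rfl⟩) h
    · exact G.irrefl h
    · simpa using hG h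
  have hsum : ∑ u ∈ insert (.inr (.inr d)) (cliqueA a b), classWeight α t u = t + a := by
    rw [Finset.sum_insert (by simp [cliqueA])]
    simp [cliqueA, classWeight]
  calc ∑ u ∈ G.neighborFinset (.inr (.inr d)), testVector α t γ p q u
      ≤ ∑ u ∈ G.neighborFinset (.inr (.inr d)), classWeight α t u :=
        Finset.sum_le_sum fun u _ => testVector_le_classWeight hP.γ_nonneg u
    _ ≤ ∑ u, classWeight α t u - ∑ u ∈ insert (.inr (.inr d)) (cliqueA a b), classWeight α t u :=
        G.sum_neighborFinset_le_sum_sub_sum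
          (fun u => (classWeight_pos (by linarith [hP.one_le_α]) hP.t_pos u).le) hns
    _ ≤ c * testVector α t γ p q (.inr (.inr d)) := by
        rw [testVector_of_ne (Ne.symm (hp d)) (Ne.symm (hq d)), sum_classWeight, hsum]
        simp only [classWeight, Sum.elim_inr]
        linarith [hP.row_kb]

theorem sum_neighborFinset_testVector_left_le (hP : RowBoundParams a b α t γ c)
    (hG : G ≤ k2JoinCliqueSum a b) (hpq : p ≠ q) (hpqG : ¬G.Adj p q)
    (hp : ∀ d, p ≠ .inr (.inr d)) (hq : ∀ d, q ≠ .inr (.inr d)) :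
    ∑ u ∈ G.neighborFinset p, testVector α t γ p q u ≤ c * testVector α t γ p q p := by
  have hx := testVector_pos hP hpq hp hq
  have hq1 := one_sub_le_testVector_right (t := t) (γ := γ) hP.one_le_α hpq hq
  have hnp : ¬G.Adj p p := G.irrefl
  rcases p with s | w | d
  · refine (G.sum_neighborFinset_le_sum_sub_sum (fun u => (hx u).le) (s := {.inl s, q})
      (by simp [hpqG])).trans ?_
    rw [sum_testVector, Finset.sum_pair hpq, testVector_left hpq]
    simp only [classWeight, Sum.elim_inl]
    linarith [hP.row_k2_end]
  · have hns : ∀ u ∈ insert (.inr (.inl w)) (insert q (cliqueB a b)),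
        ¬G.Adj (.inr (.inl w)) u := by
      simp only [Finset.mem_insert, cliqueB, Finset.mem_map, Finset.mem_univ, true_and]
      rintro u (rfl | rfl | ⟨d, rfl⟩) h
      · exact hnp h
      · exact hpqG h
      · simpa using hG h
    refine (G.sum_neighborFinset_le_sum_sub_sum (fun u => (hx u).le) hns).trans ?_
    rw [sum_testVector, Finset.sum_insert (by simp [cliqueB, hpq]),
      Finset.sum_insert (by simpa [cliqueB, eq_comm] using hq), sum_cliqueB_testVector hp hq,
      testVector_left hpq]
    simp only [classWeight, Sum.elim_inr, Sum.elim_inl]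
    linarith [hP.row_ka_end]
  · exact absurd rfl (hp d)

theorem sum_neighborFinset_testVector_le (hP : RowBoundParams a b α t γ c)
    (hG : G ≤ k2JoinCliqueSum a b) (hpq : p ≠ q) (hpqG : ¬G.Adj p q)
    (hp : ∀ d, p ≠ .inr (.inr d)) (hq : ∀ d, q ≠ .inr (.inr d)) (v : Fin 2 ⊕ (Fin a ⊕ Fin b)) :
    ∑ u ∈ G.neighborFinset v, testVector α t γ p q u ≤ c * testVector α t γ p q v := by
  by_cases hvp : v = p
  · subst hvp
    exact sum_neighborFinset_testVector_left_le hP hG hpq hpqG hp hq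
  by_cases hvq : v = q
  · subst hvq
    simp_rw [testVector_comm (p := p)]
    exact sum_neighborFinset_testVector_left_le hP hG hpq.symm (fun h => hpqG h.symm) hq hp
  rcases v with s | w | d
  · exact sum_neighborFinset_testVector_inl_le hP hpq hp hq s hvp hvq
  · exact sum_neighborFinset_testVector_inr_inl_le hP hG hpq hp hq w hvp hvq
  · exact sum_neighborFinset_testVector_inr_inr_le hP hG hp hq d

theorem specRad_le_of_not_adj (hP : RowBoundParams a b α t γ c)
    (hG : G ≤ k2JoinCliqueSum a b) (hpq : p ≠ q) (hpqG : ¬G.Adj p q)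
    (hp : ∀ d, p ≠ .inr (.inr d)) (hq : ∀ d, q ≠ .inr (.inr d)) : specRad G ≤ c :=
  specRad_le_of_sum_neighborFinset_le G (testVector_pos hP hpq hp hq)
    (sum_neighborFinset_testVector_le hP hG hpq hpqG hp hq)

end k2JoinCliqueSum

open k2JoinCliqueSum in
/-- If `k ≥ 2`, `n ≥ 2k²+1`, and `G` is a subgraph of
`K₂ ∨ (K_{n−k−1} + K_{k−1})` with minimum degree at least `k`, then
`μ(G) < n − k` unless `G = K₂ ∨ (K_{n−k−1} + K_{k−1})`. -/
theorem stmt_1 (k n : ℕ) (hk : 2 ≤ k) (hn : 2 * k ^ 2 + 1 ≤ n)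
    (G : SimpleGraph (Fin 2 ⊕ (Fin (n - k - 1) ⊕ Fin (k - 1))))
    (hsub : G ≤ graphJoin (⊤ : SimpleGraph (Fin 2))
        ((⊤ : SimpleGraph (Fin (n - k - 1))) ⊕g (⊤ : SimpleGraph (Fin (k - 1)))))
    (hδ : ∀ v, k ≤ (G.neighborSet v).ncard) :
    specRad G < (n : ℝ) - k ∨
      G = graphJoin (⊤ : SimpleGraph (Fin 2))
        ((⊤ : SimpleGraph (Fin (n - k - 1))) ⊕g (⊤ : SimpleGraph (Fin (k - 1)))) := by
  classical
  refine or_iff_not_imp_right.mpr fun hne => ?_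
  obtain ⟨p, q, hpqH, hpqG⟩ : ∃ p q, (k2JoinCliqueSum _ _).Adj p q ∧ ¬G.Adj p q := by
    by_contra! h
    exact hne (le_antisymm hsub fun _ _ => h _ _)
  have hδ' : ∀ v, k - 1 + 1 ≤ (G.neighborSet v).ncard := fun v => by have := hδ v; omega
  have hp : ∀ d, p ≠ .inr (.inr d) := by
    rintro d rfl; exact hpqG (adj_inr_inr_of_le hsub hδ' hpqH)
  have hq : ∀ d, q ≠ .inr (.inr d) := by
    rintro d rfl; exact hpqG (adj_inr_inr_of_le hsub hδ' hpqH.symm).symm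
  have hab : 2 * (k - 1) ^ 2 + 3 * (k - 1) + 1 ≤ n - k - 1 := by
    obtain ⟨j, rfl⟩ : ∃ j, k = j + 1 := ⟨k - 1, by omega⟩
    rw [add_tsub_cancel_right]
    have : 2 * j ^ 2 + 4 * j + 3 ≤ n := by nlinarith
    omega
  obtain ⟨α, t, γ, c, hc, hP⟩ := exists_rowBoundParams (a := ((n - k - 1 : ℕ) : ℝ))
    (b := ((k - 1 : ℕ) : ℝ)) (by norm_cast; omega) (by exact_mod_cast hab)
  calc specRad G ≤ c := specRad_le_of_not_adj hP hsub hpqH.ne hpqG hp hq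
    _ < ((n - k - 1 : ℕ) : ℝ) + 1 := hc
    _ = n - k := by rw [Nat.cast_sub (by omega), Nat.cast_sub (by omega)]; push_cast; ring
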